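/- Let c > 0 be an integer, let D < 0 be a fundamental discriminant, let K = ℚ(√D) with ring of integers O_K, let p be a prime number that splits in K, and let 𝔭 be a prime ideal of O_K dividing p. If p^c < |D|/4, then the order of the ideal class of 𝔭 in the class group Cl(D) is strictly larger than c. -/

import Mathlib

open NumberField

/-- `D` is a fundamental discriminant: either `D ≡ 1 (mod 4)` and `D` is squarefree,
or `D = 4m` for a squarefree integer `m ≡ 2` or `3 (mod 4)`. (We exclude the degenerate
case `D = 1`, so that `D` is the discriminant of a quadratic number field.) -/
def IsFundamentalDiscriminant (D : ℤ) : Prop :=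
  D ≠ 1 ∧ ((D % 4 = 1 ∧ Squarefree D) ∨
    ∃ m : ℤ, D = 4 * m ∧ Squarefree m ∧ (m % 4 = 2 ∨ m % 4 = 3))

/-- A prime number `p` splits in the number field `K`:
`p O_K = 𝔭·𝔭′` for two distinct prime ideals of the ring of integers. -/
def SplitsIn (p : ℕ) (K : Type) [Field K] [NumberField K] : Prop :=
  ∃ P Q : Ideal (𝓞 K), P ≠ Q ∧ P.IsPrime ∧ Q.IsPrime ∧
    Ideal.span {(p : 𝓞 K)} = P * Q

open Module
open scoped nonZeroDivisors

/-!
Let `n ≤ c` be the order of the class of `𝔭`, so `𝔭ⁿ = (α)`. Since `p` splits, `N 𝔭 = p`, so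
`|N α| = pⁿ`. The generator `α` cannot be a rational integer: `α² = pⁿ` would give `p ∣ α`,
putting `𝔭ⁿ` inside the conjugate prime `𝔭'` and forcing `𝔭 = 𝔭'`. Otherwise `1, α` span a
sublattice of `𝓞 K` of some index `k ≠ 0`, and comparing discriminants gives
`tr(α)² - 4 N(α) = k² D`, whence `|D| ≤ 4 N(α) ≤ 4 pᶜ`.
-/

section RankTwo

variable {R S : Type*} [CommRing R] [Nontrivial R] [CommRing S] [Algebra R S]
  [Module.Free R S] [Module.Finite R S]

theorem Algebra.sq_sub_trace_mul_add_norm_eq_zero (h : finrank R S = 2) (α : S) :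
    α ^ 2 - algebraMap R S (Algebra.trace R S α) * α + algebraMap R S (Algebra.norm R α) = 0 := by
  have hcp := Algebra.aeval_self_charpoly_lmul (R := R) α
  rw [LinearMap.charpoly_def, Matrix.charpoly_of_card_eq_two] at hcp
  · simpa [Algebra.trace_apply, Algebra.norm_apply, ← LinearMap.trace_eq_matrix_trace,
      LinearMap.det_toMatrix, Algebra.smul_def] using hcp
  · rwa [← finrank_eq_card_chooseBasisIndex]

theorem Algebra.discr_one_self (h : finrank R S = 2) (α : S) :
    Algebra.discr R ![1, α] = Algebra.trace R S α ^ 2 - 4 * Algebra.norm R α := by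
  have htr_sq : Algebra.trace R S (α * α) =
      Algebra.trace R S α ^ 2 - 2 * Algebra.norm R α := by
    have := congr_arg (Algebra.trace R S) (Algebra.sq_sub_trace_mul_add_norm_eq_zero h α)
    rw [← sq]
    simp only [map_add, map_sub, ← Algebra.smul_def, map_smul, Algebra.trace_algebraMap, h,
      map_zero, smul_eq_mul, nsmul_eq_mul] at this
    linear_combination this
  have htr_one : Algebra.trace R S 1 = 2 := by
    rw [← map_one (algebraMap R S), Algebra.trace_algebraMap, h, two_nsmul, one_add_one_eq_two]
  rw [Algebra.discr_def, Matrix.det_fin_two]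
  simp only [Algebra.traceMatrix_apply, Algebra.traceForm_apply, Matrix.cons_val_zero,
    Matrix.cons_val_one, Matrix.cons_val_fin_one, mul_one, one_mul, htr_one, htr_sq]
  ring

theorem Algebra.two_mul_sub_trace_sq (h : finrank R S = 2) (α : S) :
    (2 * α - algebraMap R S (Algebra.trace R S α)) ^ 2 =
      algebraMap R S (Algebra.trace R S α ^ 2 - 4 * Algebra.norm R α) := by
  have := Algebra.sq_sub_trace_mul_add_norm_eq_zero h α
  simp only [map_sub, map_mul, map_pow, map_ofNat]
  linear_combination 4 * this

end RankTwo

theorem Algebra.mem_range_of_discr_one_self_eq_zero {S : Type*} [CommRing S] [IsDomain S]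
    [CharZero S] [Module.Free ℤ S] [Module.Finite ℤ S] (h : finrank ℤ S = 2) {α : S}
    (hα : Algebra.discr ℤ ![1, α] = 0) : α ∈ Set.range (algebraMap ℤ S) := by
  rw [Algebra.discr_one_self h, sub_eq_zero] at hα
  obtain ⟨s, hs⟩ : 2 ∣ Algebra.trace ℤ S α := by
    have : 2 ∣ Algebra.trace ℤ S α ^ 2 := ⟨2 * Algebra.norm ℤ α, by rw [hα]; ring⟩
    exact Int.prime_two.dvd_of_dvd_pow this
  have hsq := Algebra.two_mul_sub_trace_sq h α
  rw [hα, sub_self, map_zero, hs, map_mul, map_ofNat, ← mul_sub] at hsq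
  refine ⟨s, (sub_eq_zero.mp ?_).symm⟩
  simpa using hsq

namespace NumberField

variable {K : Type*} [Field K] [NumberField K]

theorem exists_discr_eq_sq_mul_discr {n : ℕ} (hn : finrank ℚ K = n) (v : Fin n → 𝓞 K) :
    ∃ k : ℤ, Algebra.discr ℤ v = k ^ 2 * discr K := by
  let b := finBasisOfFinrankEq ℤ (𝓞 K) ((RingOfIntegers.rank K).trans hn)
  refine ⟨(b.toMatrix v).det, ?_⟩
  conv_lhs => rw [← b.toMatrix_map_vecMul v, Algebra.discr_of_matrix_vecMul, discr_eq_discr]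

theorem neg_discr_le_four_mul_norm (hK : finrank ℚ K = 2) (hD : discr K < 0) {α : 𝓞 K}
    (hα : α ∉ Set.range (algebraMap ℤ (𝓞 K))) : -discr K ≤ 4 * Algebra.norm ℤ α := by
  have hK' : finrank ℤ (𝓞 K) = 2 := (RingOfIntegers.rank K).trans hK
  obtain ⟨k, hk⟩ := exists_discr_eq_sq_mul_discr hK ![1, α]
  have hk0 : k ≠ 0 := by
    rintro rfl
    exact hα (Algebra.mem_range_of_discr_one_self_eq_zero hK' (by simpa using hk))
  rw [Algebra.discr_one_self hK'] at hk
  have : 0 < k ^ 2 := by positivity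
  nlinarith [sq_nonneg (Algebra.trace ℤ (𝓞 K) α)]

end NumberField

theorem ClassGroup.isPrincipal_pow_orderOf_mk0 {R : Type*} [CommRing R] [IsDedekindDomain R]
    (I : (Ideal R)⁰) :
    ((I : Ideal R) ^ orderOf (ClassGroup.mk0 I)).IsPrincipal := by
  rw [← ClassGroup.mk0_eq_one_iff (pow_mem I.2 _)]
  exact (map_pow ClassGroup.mk0 I _).trans (pow_orderOf_eq_one _)

namespace SplitsIn

variable {K : Type} [Field K] [NumberField K] {p : ℕ} {P : Ideal (𝓞 K)}

theorem exists_prime_ne (hp : p.Prime) (hsplit : SplitsIn p K) (hP : P.IsPrime)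
    (hmem : (p : 𝓞 K) ∈ P) :
    ∃ Q : Ideal (𝓞 K), Q.IsPrime ∧ Q ≠ P ∧ Ideal.span {(p : 𝓞 K)} = P * Q := by
  obtain ⟨P₁, P₂, hne, hP₁, hP₂, hspan⟩ := hsplit
  have hspan0 : Ideal.span {(p : 𝓞 K)} ≠ ⊥ := by
    simpa [Ideal.span_singleton_eq_bot] using hp.ne_zero
  have hle : P₁ * P₂ ≤ P := hspan ▸ (Ideal.span_singleton_le_iff_mem _).mpr hmem
  rcases hP.mul_le.mp hle with h | h
  · have := (hP₁.isMaximal (by rintro rfl; simp_all)).eq_of_le hP.ne_top h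
    exact ⟨P₂, hP₂, this ▸ hne.symm, this ▸ hspan⟩
  · have := (hP₂.isMaximal (by rintro rfl; simp_all)).eq_of_le hP.ne_top h
    exact ⟨P₁, hP₁, this ▸ hne, by rw [hspan, this, mul_comm]⟩

theorem absNorm_eq (hK : finrank ℚ K = 2) (hp : p.Prime) (hsplit : SplitsIn p K)
    (hP : P.IsPrime) (hmem : (p : 𝓞 K) ∈ P) : Ideal.absNorm P = p := by
  obtain ⟨Q, hQ, -, hspan⟩ := hsplit.exists_prime_ne hp hP hmem
  have hnorm : Ideal.absNorm P * Ideal.absNorm Q = p ^ 2 := by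
    rw [← map_mul, ← hspan, Ideal.absNorm_span_natCast, RingOfIntegers.rank, hK]
  exact ((hp.mul_eq_prime_sq_iff (mt Ideal.absNorm_eq_one_iff.mp hP.ne_top)
    (mt Ideal.absNorm_eq_one_iff.mp hQ.ne_top)).mp hnorm).1

theorem pow_ne_span_intCast (hK : finrank ℚ K = 2) (hp : p.Prime) (hsplit : SplitsIn p K)
    (hP : P.IsPrime) (hP0 : P ≠ ⊥) (hmem : (p : 𝓞 K) ∈ P) {n : ℕ} (hn : n ≠ 0) (z : ℤ) :
    P ^ n ≠ Ideal.span {(z : 𝓞 K)} := by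
  intro hz
  obtain ⟨Q, hQ, hQP, hspan⟩ := hsplit.exists_prime_ne hp hP hmem
  have hnorm : z.natAbs ^ 2 = p ^ n := by
    have := congr_arg Ideal.absNorm hz
    rwa [map_pow, hsplit.absNorm_eq hK hp hP hmem, Ideal.absNorm_span_singleton,
      ← eq_intCast (algebraMap ℤ (𝓞 K)), Algebra.norm_algebraMap, RingOfIntegers.rank, hK,
      Int.natAbs_pow, eq_comm] at this
  obtain ⟨w, rfl⟩ : (p : ℤ) ∣ z :=
    Int.natCast_dvd.mpr (hp.dvd_of_dvd_pow (hnorm ▸ dvd_pow_self p hn))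
  have hPQ : P ^ n ≤ Q := by
    have hpQ : (p : 𝓞 K) ∈ Q := Ideal.mul_le_right (hspan ▸ Ideal.mem_span_singleton_self _)
    rw [hz, Ideal.span_singleton_le_iff_mem, Int.cast_mul, Int.cast_natCast]
    exact Ideal.mul_mem_right _ Q hpQ
  exact hQP ((hP.isMaximal hP0).eq_of_le hQ.ne_top (hQ.le_of_pow_le hPQ)).symm

end SplitsIn

theorem order_gt_of_small_split_prime_general (c : ℕ)
    (D : ℤ) (hneg : D < 0)
    (K : Type) [Field K] [NumberField K]
    (hdeg : Module.finrank ℚ K = 2) (hdisc : NumberField.discr K = D)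
    (p : ℕ) (hp : p.Prime) (hsplit : SplitsIn p K)
    (P : Ideal (𝓞 K)) (hP : P.IsPrime) (hP0 : P ≠ 0) (hmem : (p : 𝓞 K) ∈ P)
    (hsize : (p : ℝ) ^ c < |(D : ℝ)| / 4) :
    c < orderOf (ClassGroup.mk0 ⟨P, mem_nonZeroDivisors_of_ne_zero hP0⟩) := by
  by_contra! hnc
  obtain ⟨α, hα⟩ := (ClassGroup.isPrincipal_pow_orderOf_mk0 ⟨P, _⟩).principal
  set n := orderOf (ClassGroup.mk0 ⟨P, mem_nonZeroDivisors_of_ne_zero hP0⟩)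
  replace hα : P ^ n = Ideal.span {α} := hα
  have hnorm : (Algebra.norm ℤ α).natAbs = p ^ n := by
    rw [← Ideal.absNorm_span_singleton, ← hα, map_pow, hsplit.absNorm_eq hdeg hp hP hmem]
  have hαℤ : α ∉ Set.range (algebraMap ℤ (𝓞 K)) := by
    rintro ⟨z, rfl⟩
    exact hsplit.pow_ne_span_intCast hdeg hp hP hP0 hmem (orderOf_pos _).ne' z (by simpa using hα)
  have hlower := neg_discr_le_four_mul_norm hdeg (hdisc ▸ hneg) hαℤ
  have hupper : Algebra.norm ℤ α ≤ (p : ℤ) ^ c := calc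
    Algebra.norm ℤ α ≤ (Algebra.norm ℤ α).natAbs := Int.le_natAbs
    _ = (p : ℤ) ^ n := by rw [hnorm]; push_cast; rfl
    _ ≤ (p : ℤ) ^ c := pow_le_pow_right₀ (mod_cast hp.one_le) hnc
  rw [abs_of_neg (mod_cast hneg)] at hsize
  have : 4 * (p : ℤ) ^ c < -D := by exact_mod_cast (by linarith : 4 * (p : ℝ) ^ c < -D)
  omega

/-- Let `c > 0`, let `D < 0` be a fundamental discriminant, let `K = ℚ(√D)`, let `p` be a
prime that splits in `K` and `𝔭` a prime ideal of `O_K` dividing `p`. If `p^c < |D|/4` then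
the order of the class of `𝔭` in the class group is strictly larger than `c`. -/
theorem order_gt_of_small_split_prime (c : ℕ) (hc : 0 < c)
    (D : ℤ) (hfund : IsFundamentalDiscriminant D) (hneg : D < 0)
    (K : Type) [Field K] [NumberField K]
    (hdeg : Module.finrank ℚ K = 2) (hdisc : NumberField.discr K = D)
    (p : ℕ) (hp : p.Prime) (hsplit : SplitsIn p K)
    (P : Ideal (𝓞 K)) (hP : P.IsPrime) (hP0 : P ≠ 0) (hmem : (p : 𝓞 K) ∈ P)
    (hsize : (p : ℝ) ^ c < |(D : ℝ)| / 4) :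
    c < orderOf (ClassGroup.mk0 ⟨P, mem_nonZeroDivisors_of_ne_zero hP0⟩) :=
  order_gt_of_small_split_prime_general c D hneg K hdeg hdisc p hp hsplit P hP hP0 hmem hsize
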